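/- arXiv:1805.02057 — 2 statements merged into one kernel-verified Lean document; each statement's English description precedes it below -/
import Mathlib

section
/- Let Δ be a crystallographic root system with positive roots Δ⁺ and simple roots Π. If γ ∈ Δ⁺ and α, β ∈ Π are such that γ − α and γ − β are both roots in Δ⁺, then either γ − α − β ∈ Δ⁺, or γ = α + β and α, β are adjacent in the Dynkin diagram (i.e., (α,β) ≠ 0). -/
/-!
Neither `β - α` nor `α - β` is a root, so `⟪α, β⟫ ≤ 0` and `⟪γ - α, γ - β⟫ ≤ 0`. Expanding
`0 < ⟪γ, γ⟫ = ⟪(γ - α) + α, (γ - β) + β⟫` then forces `⟪γ - α, β⟫ > 0` or `⟪γ - β, α⟫ > 0`, and two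
distinct roots with positive inner product differ by a root. The difference `α + β - γ` has
nonpositive simple coefficients, so it is not a positive root, and `γ - α - β` is one unless
`γ = α + β`. In that case `⟪α, β⟫ = 0` is impossible, because `s_α (α + β) = β - α`.
-/

open scoped RealInnerProductSpace

/-- Combinatorial data of the set of positive roots of a (reduced, irreducible,
crystallographic) root system of a simple Lie algebra, with a chosen set of
simple roots, sitting in a real inner product space `V`. -/
structure SimpleRS (V : Type*) [NormedAddCommGroup V] [InnerProductSpace ℝ V] where
  /-- the positive roots Δ⁺ -/
  pos : Finset V
  /-- the simple roots Π -/
  simple : Finset V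
  simple_sub : simple ⊆ pos
  indep : LinearIndependent ℝ (fun α : {x // x ∈ simple} => (α : V))
  root_ne : ∀ γ ∈ pos, γ ≠ (0 : V)
  /-- `coeff γ α` is the coefficient of the simple root `α` in `γ` -/
  coeff : V → V → ℕ
  coeff_spec : ∀ γ ∈ pos, γ = ∑ α ∈ simple, (coeff γ α : ℝ) • α
  /-- the reflection of a root in a root is again a root (positive or negative) -/
  reflect_mem : ∀ α ∈ pos, ∀ γ ∈ pos,
    (γ - (2 * ⟪γ, α⟫ / ⟪α, α⟫) • α ∈ pos ∨ -(γ - (2 * ⟪γ, α⟫ / ⟪α, α⟫) • α) ∈ pos)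
  crystallographic : ∀ α ∈ pos, ∀ γ ∈ pos, ∃ z : ℤ, 2 * ⟪γ, α⟫ / ⟪α, α⟫ = (z : ℝ)
  reduced : ∀ α ∈ pos, (2 : ℝ) • α ∉ pos
  /-- irreducibility: the Dynkin diagram is connected -/
  irreducible : ∀ S ⊆ simple, (∀ α ∈ S, ∀ β ∈ simple, β ∉ S → ⟪α, β⟫ = 0) →
      S = ∅ ∨ S = simple
  /-- the highest root θ -/
  highest : V
  highest_mem : highest ∈ pos
  highest_spec : ∀ γ ∈ pos, ∃ c : V → ℕ, highest - γ = ∑ α ∈ simple, (c α : ℝ) • α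

namespace SimpleRS

variable {V : Type*} [NormedAddCommGroup V] [InnerProductSpace ℝ V] (R : SimpleRS V)

/-- the root order: `μ ≼ ν` iff `ν − μ` is a nonnegative integral combination
of simple roots -/
def rle (μ ν : V) : Prop := ∃ c : V → ℕ, ν - μ = ∑ α ∈ R.simple, (c α : ℝ) • α

/-- the support of a root: simple roots occurring with nonzero coefficient -/
def supp (γ : V) : Set V := {α | α ∈ R.simple ∧ R.coeff γ α ≠ 0}

/-- the height of a root -/
def ht (γ : V) : ℕ := ∑ α ∈ R.simple, R.coeff γ α

/-- the root system is of type `A_n`: its Dynkin diagram is a simply laced chain -/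
def IsTypeA : Prop :=
  ∃ (n : ℕ) (e : Fin n ≃ {x // x ∈ R.simple}),
    (∀ i j : Fin n, ⟪(e i : V), (e j : V)⟫ ≠ 0 ↔ ((i : ℤ) - (j : ℤ)).natAbs ≤ 1) ∧
    (∀ i j : Fin n, ‖(e i : V)‖ = ‖(e j : V)‖)

/-- all roots have the same length -/
def SimplyLaced : Prop := ∀ α ∈ R.pos, ∀ β ∈ R.pos, ‖α‖ = ‖β‖

/-- a positive root `γ` is commutative if the upper ideal it generates is abelian,
i.e. no two of its elements sum to a root -/
def IsCom (γ : V) : Prop :=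
  ∀ ν₁ ∈ R.pos, ∀ ν₂ ∈ R.pos, R.rle γ ν₁ → R.rle γ ν₂ →
    ν₁ + ν₂ ∉ R.pos ∧ -(ν₁ + ν₂) ∉ R.pos

/-- the coefficientwise floor `⌊θ/2⌋` of half the highest root -/
def floorTheta : V := ∑ α ∈ R.simple, ((R.coeff R.highest α / 2 : ℕ) : ℝ) • α

lemma eq_on_simple_of_sum_smul_eq {f g : V → ℝ}
    (h : ∑ σ ∈ R.simple, f σ • σ = ∑ σ ∈ R.simple, g σ • σ) :
    ∀ σ ∈ R.simple, f σ = g σ :=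
  (linearIndepOn_finset_iffₛ (v := id) (s := R.simple)).mp R.indep f g h

lemma nonneg_of_mem_pos_of_eq_sum {v : V} (hv : v ∈ R.pos) {f : V → ℝ}
    (hf : v = ∑ σ ∈ R.simple, f σ • σ) (σ : V) (hσ : σ ∈ R.simple) : 0 ≤ f σ := by
  rw [R.eq_on_simple_of_sum_smul_eq (hf.symm.trans (R.coeff_spec v hv)) σ hσ]
  positivity

lemma sum_ite_smul_self [DecidableEq V] {α : V} (hα : α ∈ R.simple) :
    ∑ σ ∈ R.simple, (if σ = α then (1 : ℝ) else 0) • σ = α := by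
  simp [ite_smul, hα]

lemma sub_notMem_pos {α β : V} (hα : α ∈ R.simple) (hβ : β ∈ R.simple) (hαβ : α ≠ β) :
    β - α ∉ R.pos := by
  classical
  intro h
  have hrepr : β - α = ∑ σ ∈ R.simple,
      ((if σ = β then (1 : ℝ) else 0) - (if σ = α then 1 else 0)) • σ := by
    simp only [sub_smul, Finset.sum_sub_distrib, R.sum_ite_smul_self hα, R.sum_ite_smul_self hβ]
  have := R.nonneg_of_mem_pos_of_eq_sum h hrepr α hα
  norm_num [hαβ] at this

lemma one_le_coeff_of_sub_mem_pos {γ α : V} (hγ : γ ∈ R.pos) (hα : α ∈ R.simple)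
    (h : γ - α ∈ R.pos) : 1 ≤ R.coeff γ α := by
  classical
  have hrepr : γ - α = ∑ σ ∈ R.simple,
      ((R.coeff γ σ : ℝ) - (if σ = α then 1 else 0)) • σ := by
    simp only [sub_smul, Finset.sum_sub_distrib, R.sum_ite_smul_self hα, ← R.coeff_spec γ hγ]
  have := R.nonneg_of_mem_pos_of_eq_sum h hrepr α hα
  simp only [↓reduceIte, sub_nonneg] at this
  exact_mod_cast this

/-- The simple coefficients of `α + β - γ` are all `≤ 0`, those of a positive root all `≥ 0`,
and a root is not `0`. -/
lemma add_sub_notMem_pos {γ α β : V} (hγ : γ ∈ R.pos) (hα : α ∈ R.simple)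
    (hβ : β ∈ R.simple) (hαβ : α ≠ β) (hcα : 1 ≤ R.coeff γ α) (hcβ : 1 ≤ R.coeff γ β) :
    α + β - γ ∉ R.pos := by
  classical
  intro h
  set f : V → ℝ := fun σ ↦
    (if σ = α then 1 else 0) + (if σ = β then 1 else 0) - R.coeff γ σ with hf
  have hrepr : α + β - γ = ∑ σ ∈ R.simple, f σ • σ := by
    simp only [hf, add_smul, sub_smul, Finset.sum_add_distrib, Finset.sum_sub_distrib,
      R.sum_ite_smul_self hα, R.sum_ite_smul_self hβ, ← R.coeff_spec γ hγ]
  have hf_nonpos : ∀ σ ∈ R.simple, f σ ≤ 0 := by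
    intro σ _
    have hcα' : (1 : ℝ) ≤ R.coeff γ α := by exact_mod_cast hcα
    have hcβ' : (1 : ℝ) ≤ R.coeff γ β := by exact_mod_cast hcβ
    by_cases hσα : σ = α
    · subst hσα; simp [hf, hαβ, hcα']
    by_cases hσβ : σ = β
    · subst hσβ; simp [hf, hσα, hcβ']
    · simp [hf, hσα, hσβ]
  have hzero : α + β - γ = 0 := by
    rw [hrepr]
    refine Finset.sum_eq_zero fun σ hσ ↦ ?_
    rw [le_antisymm (hf_nonpos σ hσ) (R.nonneg_of_mem_pos_of_eq_sum h hrepr σ hσ), zero_smul]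
  exact R.root_ne _ h hzero

end SimpleRS

/-- If the two Cartan integers of `x ≠ y` are `≥ 2`, then `⟪y, y⟫ ≤ ⟪x, y⟫` and
`⟪x, x⟫ ≤ ⟪x, y⟫`, so `‖x - y‖² ≤ 0`. -/
lemma eq_one_or_eq_one_of_inner_pos {F : Type*} [NormedAddCommGroup F] [InnerProductSpace ℝ F]
    {x y : F} (hne : x ≠ y) (hpos : 0 < ⟪x, y⟫) {a b : ℤ}
    (ha : 2 * ⟪x, y⟫ / ⟪y, y⟫ = a) (hb : 2 * ⟪y, x⟫ / ⟪x, x⟫ = b) : a = 1 ∨ b = 1 := by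
  have hxx : 0 < ⟪x, x⟫ := real_inner_self_pos.mpr fun h ↦ by simp [h] at hpos
  have hyy : 0 < ⟪y, y⟫ := real_inner_self_pos.mpr fun h ↦ by simp [h] at hpos
  rw [real_inner_comm, div_eq_iff hxx.ne'] at hb
  rw [div_eq_iff hyy.ne'] at ha
  by_contra! h
  have ha2 : (2 : ℝ) ≤ a := by
    have : (0 : ℤ) < a := by
      exact_mod_cast (pos_of_mul_pos_left (by rw [← ha]; positivity) hyy.le : (0 : ℝ) < a)
    exact_mod_cast (show 2 ≤ a by omega)
  have hb2 : (2 : ℝ) ≤ b := by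
    have : (0 : ℤ) < b := by
      exact_mod_cast (pos_of_mul_pos_left (by rw [← hb]; positivity) hxx.le : (0 : ℝ) < b)
    exact_mod_cast (show 2 ≤ b by omega)
  have hnorm : ⟪x - y, x - y⟫ ≤ 0 := by
    simp only [inner_sub_left, inner_sub_right, real_inner_comm x y]
    nlinarith
  exact hne (sub_eq_zero.mp (real_inner_self_nonpos.mp hnorm))

namespace SimpleRS

variable {V : Type*} [NormedAddCommGroup V] [InnerProductSpace ℝ V] (R : SimpleRS V)

lemma sub_mem_pos_or_of_cartan_eq_one {x y : V} (hx : x ∈ R.pos) (hy : y ∈ R.pos)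
    (h : 2 * ⟪x, y⟫ / ⟪y, y⟫ = 1) : x - y ∈ R.pos ∨ y - x ∈ R.pos := by
  simpa only [h, one_smul, neg_sub] using R.reflect_mem y hy x hx

lemma sub_mem_pos_or_of_inner_pos {x y : V} (hx : x ∈ R.pos) (hy : y ∈ R.pos) (hne : x ≠ y)
    (hpos : 0 < ⟪x, y⟫) : x - y ∈ R.pos ∨ y - x ∈ R.pos := by
  obtain ⟨a, ha⟩ := R.crystallographic y hy x hx
  obtain ⟨b, hb⟩ := R.crystallographic x hx y hy
  rcases eq_one_or_eq_one_of_inner_pos hne hpos ha hb with rfl | rfl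
  · exact R.sub_mem_pos_or_of_cartan_eq_one hx hy (by rw [ha, Int.cast_one])
  · exact (R.sub_mem_pos_or_of_cartan_eq_one hy hx (by rw [hb, Int.cast_one])).symm

lemma inner_nonpos_of_sub_notMem_pos {x y : V} (hx : x ∈ R.pos) (hy : y ∈ R.pos) (hne : x ≠ y)
    (hxy : x - y ∉ R.pos) (hyx : y - x ∉ R.pos) : ⟪x, y⟫ ≤ 0 := by
  by_contra! hpos
  exact (R.sub_mem_pos_or_of_inner_pos hx hy hne hpos).elim hxy hyx

lemma inner_nonpos_of_mem_simple {α β : V} (hα : α ∈ R.simple) (hβ : β ∈ R.simple)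
    (hαβ : α ≠ β) : ⟪α, β⟫ ≤ 0 :=
  R.inner_nonpos_of_sub_notMem_pos (R.simple_sub hα) (R.simple_sub hβ) hαβ
    (R.sub_notMem_pos hβ hα hαβ.symm) (R.sub_notMem_pos hα hβ hαβ)

/-- Reflecting `α + β` in `α` gives `β - α`. -/
lemma add_notMem_pos_of_inner_eq_zero {α β : V} (hα : α ∈ R.simple) (hβ : β ∈ R.simple)
    (hαβ : α ≠ β) (h : ⟪α, β⟫ = 0) : α + β ∉ R.pos := by
  intro hmem
  have hαα : ⟪α, α⟫ ≠ 0 := real_inner_self_pos.mpr (R.root_ne α (R.simple_sub hα)) |>.ne'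
  have hcartan : 2 * ⟪α + β, α⟫ / ⟪α, α⟫ = 2 := by
    rw [inner_add_left, real_inner_comm α β, h, add_zero, mul_div_cancel_right₀ _ hαα]
  have hrefl := R.reflect_mem α (R.simple_sub hα) _ hmem
  rw [hcartan, two_smul, add_sub_add_left_eq_sub, neg_sub] at hrefl
  rcases hrefl with h' | h'
  exacts [R.sub_notMem_pos hα hβ hαβ h', R.sub_notMem_pos hβ hα hαβ.symm h']

lemma sub_sub_mem_pos_of_inner_pos {γ α β : V} (hγ : γ ∈ R.pos) (hα : α ∈ R.simple)
    (hβ : β ∈ R.simple) (hαβ : α ≠ β) (h1 : γ - α ∈ R.pos) (h2 : γ - β ∈ R.pos)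
    (hsum : γ ≠ α + β) (hpos : 0 < ⟪γ - α, β⟫) : γ - α - β ∈ R.pos := by
  have hne : γ - α ≠ β := fun h ↦ hsum (sub_eq_iff_eq_add'.mp h)
  refine (R.sub_mem_pos_or_of_inner_pos h1 (R.simple_sub hβ) hne hpos).resolve_right ?_
  rw [show β - (γ - α) = α + β - γ by abel]
  exact R.add_sub_notMem_pos hγ hα hβ hαβ (R.one_le_coeff_of_sub_mem_pos hγ hα h1)
    (R.one_le_coeff_of_sub_mem_pos hγ hβ h2)

end SimpleRS

/-- if `γ − α` and `γ − β` are positive roots for distinct simple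
roots `α, β`, then either `γ − α − β` is a positive root, or `γ = α + β` and
`α, β` are adjacent in the Dynkin diagram. -/
theorem stmt0 {V : Type*} [NormedAddCommGroup V] [InnerProductSpace ℝ V]
    (R : SimpleRS V) {γ α β : V} (hγ : γ ∈ R.pos)
    (hα : α ∈ R.simple) (hβ : β ∈ R.simple) (hαβ : α ≠ β)
    (h1 : γ - α ∈ R.pos) (h2 : γ - β ∈ R.pos) :
    γ - α - β ∈ R.pos ∨ (γ = α + β ∧ ⟪α, β⟫ ≠ 0) := by
  by_cases hsum : γ = α + β
  · exact Or.inr ⟨hsum, fun h ↦ R.add_notMem_pos_of_inner_eq_zero hα hβ hαβ h (hsum ▸ hγ)⟩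
  left
  have hγγ : 0 < ⟪γ, γ⟫ := real_inner_self_pos.mpr (R.root_ne γ hγ)
  have hαβ_nonpos : ⟪α, β⟫ ≤ 0 := R.inner_nonpos_of_mem_simple hα hβ hαβ
  have hdiff_nonpos : ⟪γ - α, γ - β⟫ ≤ 0 :=
    R.inner_nonpos_of_sub_notMem_pos h1 h2 (sub_right_injective.ne hαβ)
      (by rw [sub_sub_sub_cancel_left]; exact R.sub_notMem_pos hα hβ hαβ)
      (by rw [sub_sub_sub_cancel_left]; exact R.sub_notMem_pos hβ hα hαβ.symm)
  have hexpand : ⟪γ, γ⟫ = ⟪γ - α, γ - β⟫ + ⟪γ - α, β⟫ + ⟪γ - β, α⟫ + ⟪α, β⟫ := by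
    simp only [inner_sub_left, inner_sub_right, real_inner_comm α γ, real_inner_comm β γ,
      real_inner_comm α β]
    ring
  rcases lt_or_ge 0 ⟪γ - α, β⟫ with hpos | hnonpos
  · exact R.sub_sub_mem_pos_of_inner_pos hγ hα hβ hαβ h1 h2 hsum hpos
  · rw [sub_right_comm]
    exact R.sub_sub_mem_pos_of_inner_pos hγ hβ hα hαβ.symm h2 h1 (by rwa [add_comm])
      (by linarith)
end

section
/- Equip the positive roots Δ⁺ of a simple root system with the partial order μ ≼ ν iff ν − μ is a nonnegative integral combination of simple roots. For γ₁, γ₂ ∈ Δ⁺, the greatest lower bound γ₁ ∧ γ₂ exists in (Δ⁺, ≼) if and only if supp(γ₁) ∩ supp(γ₂) ≠ ∅, where supp(γ) is the set of simple roots occurring with nonzero coefficient in γ. -/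
open scoped RealInnerProductSpace

/-!
A lower bound of `γ₁` and `γ₂` is a root, so its support lies in both supports; hence the
meet cannot exist when the supports are disjoint. Conversely we show that the coefficientwise
minimum `m` of `γ₁` and `γ₂` is a root, which is then clearly their meet.

This goes by induction on the `ℓ¹`-distance of the coefficient vectors. If `γ₂` exceeds `γ₁` at a
simple root `α` with `⟪γ₂, α⟫ > 0`, then `γ₂ - α` is a root closer to `γ₁` with the same minimum
with `γ₁`. Otherwise write `γ₂ = m + v` and `γ₁ = m + w`: then `⟪γ₂, v⟫ ≤ 0` and `⟪w, v⟫ ≤ 0`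
(disjoint supports), so `⟪γ₁, v⟫ ≤ -⟪v, v⟫ < 0` and `γ₁ + α` is a root for some `α` in the
support of `v`. If `v` has height at least two, the induction applied to `(γ₁ + α, γ₂)` yields
the root `m + α`, and applied to `(γ₁, m + α)` it yields `m`. By symmetry the only remaining
case is `γ₂ = m + α`, `γ₁ = m + β` with `⟪γ₂, α⟫ ≤ 0` and `⟪γ₁, β⟫ ≤ 0`, which is impossible.
-/

theorem Finset.sum_tsub_lt_two_iff {ι : Type*} [DecidableEq ι] {s : Finset ι} {f g : ι → ℕ}
    {i : ι} (hi : i ∈ s) (hlt : f i < g i) :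
    ∑ j ∈ s, (g j - f j) < 2 ↔ ∀ j ∈ s, g j ≤ f j + if j = i then 1 else 0 := by
  have hnonneg : ∀ j ∈ s, 0 ≤ g j - f j := fun _ _ => Nat.zero_le _
  constructor
  · intro hsum j hj
    split_ifs with hji
    · subst hji
      have := Finset.single_le_sum hnonneg hj
      omega
    · have := Finset.add_le_sum hnonneg hi hj (Ne.symm hji)
      omega
  · intro hle
    calc ∑ j ∈ s, (g j - f j) ≤ ∑ j ∈ s, if j = i then 1 else 0 :=
          Finset.sum_le_sum fun j hj => by have := hle j hj; omega
      _ = 1 := by simp [hi]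
      _ < 2 := by norm_num

namespace SimpleRS

variable {V : Type*} [NormedAddCommGroup V] [InnerProductSpace ℝ V] {R : SimpleRS V}

open Finset

theorem eq_of_sum_smul_simple_eq {f g : V → ℝ}
    (h : ∑ α ∈ R.simple, f α • α = ∑ α ∈ R.simple, g α • α) :
    ∀ α ∈ R.simple, f α = g α := by
  intro α hα
  have hzero : ∑ β : R.simple, (f β - g β) • (β : V) = 0 := by
    rw [univ_eq_attach, sum_attach R.simple fun β => (f β - g β) • β]
    simp only [sub_smul, sum_sub_distrib, h, sub_self]
  have := linearIndependent_iff'.mp R.indep univ _ hzero ⟨α, hα⟩ (mem_univ _)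
  exact sub_eq_zero.mp this

theorem coeff_eq_of_eq_sum {γ : V} (hγ : γ ∈ R.pos) {f : V → ℕ}
    (h : γ = ∑ α ∈ R.simple, (f α : ℝ) • α) : ∀ α ∈ R.simple, R.coeff γ α = f α := by
  intro α hα
  have := eq_of_sum_smul_simple_eq (f := fun β => (R.coeff γ β : ℝ)) (g := fun β => (f β : ℝ))
    (by rw [← R.coeff_spec γ hγ, ← h]) α hα
  exact_mod_cast this

theorem exists_coeff_ne_zero {γ : V} (hγ : γ ∈ R.pos) : ∃ α ∈ R.simple, R.coeff γ α ≠ 0 := by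
  by_contra! h
  refine R.root_ne γ hγ ?_
  rw [R.coeff_spec γ hγ]
  exact sum_eq_zero fun α hα => by simp [h α hα]

theorem simple_eq_sum [DecidableEq V] {α : V} (hα : α ∈ R.simple) :
    α = ∑ β ∈ R.simple, ((if β = α then 1 else 0 : ℕ) : ℝ) • β := by
  simp [hα]

theorem add_simple_eq_sum [DecidableEq V] {γ α : V} (hγ : γ ∈ R.pos) (hα : α ∈ R.simple) :
    γ + α = ∑ β ∈ R.simple, ((R.coeff γ β + if β = α then 1 else 0 : ℕ) : ℝ) • β := by
  conv_lhs => rw [R.coeff_spec γ hγ, simple_eq_sum hα]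
  simp only [← sum_add_distrib, Nat.cast_add, add_smul]

theorem coeff_simple [DecidableEq V] {α : V} (hα : α ∈ R.simple) :
    ∀ β ∈ R.simple, R.coeff α β = if β = α then 1 else 0 :=
  coeff_eq_of_eq_sum (R.simple_sub hα) (simple_eq_sum hα)

theorem coeff_add_simple [DecidableEq V] {γ α : V} (hγ : γ ∈ R.pos) (hα : α ∈ R.simple)
    (h : γ + α ∈ R.pos) :
    ∀ β ∈ R.simple, R.coeff (γ + α) β = R.coeff γ β + if β = α then 1 else 0 :=
  coeff_eq_of_eq_sum h (add_simple_eq_sum hγ hα)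

theorem coeff_add {x y : V} (hx : x ∈ R.pos) (hy : y ∈ R.pos) (hxy : x + y ∈ R.pos) :
    ∀ α ∈ R.simple, R.coeff (x + y) α = R.coeff x α + R.coeff y α := by
  refine coeff_eq_of_eq_sum hxy ?_
  conv_lhs => rw [R.coeff_spec x hx, R.coeff_spec y hy]
  simp only [← sum_add_distrib, Nat.cast_add, add_smul]

theorem one_le_ht {γ : V} (hγ : γ ∈ R.pos) : 1 ≤ R.ht γ := by
  obtain ⟨α, hα, hne⟩ := exists_coeff_ne_zero hγ
  exact (Nat.one_le_iff_ne_zero.mpr hne).trans (single_le_sum (fun _ _ => Nat.zero_le _) hα)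

theorem ht_simple {α : V} (hα : α ∈ R.simple) : R.ht α = 1 := by
  classical
  rw [ht, sum_congr rfl (coeff_simple hα)]
  simp [hα]

theorem add_notMem_simple {x y : V} (hx : x ∈ R.pos) (hy : y ∈ R.pos) : x + y ∉ R.simple := by
  intro hxy
  have hht : R.ht (x + y) = R.ht x + R.ht y := by
    rw [ht, ht, ht, ← sum_add_distrib]
    exact sum_congr rfl (coeff_add hx hy (R.simple_sub hxy))
  have := one_le_ht hx
  have := one_le_ht hy
  rw [ht_simple hxy] at hht
  omega

theorem neg_add_notMem {x y : V} (hx : x ∈ R.pos) (hy : y ∈ R.pos) : -(x + y) ∉ R.pos := by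
  intro hz
  have hsum : ∑ α ∈ R.simple, (R.coeff (-(x + y)) α : ℝ) • α
      = ∑ α ∈ R.simple, (-((R.coeff x α : ℝ) + R.coeff y α)) • α := by
    rw [← R.coeff_spec _ hz]
    conv_lhs => rw [R.coeff_spec x hx, R.coeff_spec y hy]
    simp only [neg_smul, add_smul, sum_neg_distrib, sum_add_distrib]
  obtain ⟨α, hα, hne⟩ := exists_coeff_ne_zero hx
  have := eq_of_sum_smul_simple_eq hsum α hα
  have : (0 : ℝ) < R.coeff x α := by exact_mod_cast Nat.pos_of_ne_zero hne
  have : (0 : ℝ) ≤ R.coeff (-(x + y)) α := Nat.cast_nonneg _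
  have : (0 : ℝ) ≤ R.coeff y α := Nat.cast_nonneg _
  linarith

theorem rle_iff_coeff_le {μ ν : V} (hμ : μ ∈ R.pos) (hν : ν ∈ R.pos) :
    R.rle μ ν ↔ ∀ α ∈ R.simple, R.coeff μ α ≤ R.coeff ν α := by
  constructor
  · rintro ⟨c, hc⟩ α hα
    have hsum : ν = ∑ β ∈ R.simple, ((R.coeff μ β + c β : ℕ) : ℝ) • β := by
      rw [← sub_add_cancel ν μ, hc]
      conv_lhs => rw [R.coeff_spec μ hμ]
      simp only [← sum_add_distrib, Nat.cast_add, add_smul, add_comm]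
    rw [coeff_eq_of_eq_sum hν hsum α hα]
    exact Nat.le_add_right _ _
  · intro hle
    refine ⟨fun α => R.coeff ν α - R.coeff μ α, ?_⟩
    conv_lhs => rw [R.coeff_spec ν hν, R.coeff_spec μ hμ]
    rw [← sum_sub_distrib]
    exact sum_congr rfl fun β hβ => by rw [← sub_smul, Nat.cast_sub (hle β hβ)]

theorem inner_self_pos {γ : V} (hγ : γ ∈ R.pos) : 0 < ⟪γ, γ⟫ :=
  real_inner_self_pos.mpr (R.root_ne γ hγ)

/-- The Cartan integers of `γ` and `r • γ` are `2 * r` and `2 / r`; reducedness excludes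
`r = 1 / 2` and `r = 2`. -/
theorem eq_one_of_smul_mem {γ : V} {r : ℝ} (hγ : γ ∈ R.pos) (hr : r • γ ∈ R.pos) : r = 1 := by
  have hr0 : 0 < r := by
    obtain ⟨α, hα, hne⟩ := exists_coeff_ne_zero hγ
    have hsum : ∑ β ∈ R.simple, (R.coeff (r • γ) β : ℝ) • β
        = ∑ β ∈ R.simple, (r * R.coeff γ β) • β := by
      rw [← R.coeff_spec _ hr]
      conv_lhs => rw [R.coeff_spec γ hγ]
      simp only [smul_sum, smul_smul]
    have hcoeff := eq_of_sum_smul_simple_eq hsum α hα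
    have hpos : (0 : ℝ) < R.coeff γ α := by exact_mod_cast Nat.pos_of_ne_zero hne
    have hne0 : r ≠ 0 := by rintro rfl; exact R.root_ne _ hr (zero_smul ℝ γ)
    have : 0 ≤ r * R.coeff γ α := hcoeff ▸ Nat.cast_nonneg _
    exact lt_of_le_of_ne (nonneg_of_mul_nonneg_left this hpos) hne0.symm
  have hγγ := inner_self_pos hγ
  obtain ⟨z₁, hz₁⟩ := R.crystallographic γ hγ (r • γ) hr
  obtain ⟨z₂, hz₂⟩ := R.crystallographic (r • γ) hr γ hγ
  simp only [real_inner_smul_left, real_inner_smul_right] at hz₁ hz₂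
  have hz₁r : (z₁ : ℝ) = 2 * r := by rw [← hz₁]; field_simp
  have hz₂r : (z₂ : ℝ) * r = 2 := by rw [← hz₂]; field_simp
  have hprod : z₁ * z₂ = 4 := by
    have : (z₁ : ℝ) * z₂ = 4 := by rw [hz₁r]; linear_combination 2 * hz₂r
    exact_mod_cast this
  have hz₁pos : 0 < z₁ := by
    have : (0 : ℝ) < z₁ := by rw [hz₁r]; positivity
    exact_mod_cast this
  have hz₁le : z₁ ≤ 4 := Int.le_of_dvd (by norm_num) ⟨z₂, hprod.symm⟩
  interval_cases z₁
  · refine absurd ?_ (R.reduced _ hr)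
    rw [smul_smul, show (2 : ℝ) * r = 1 by push_cast at hz₁r; linarith, one_smul]
    exact hγ
  · push_cast at hz₁r; linarith
  · omega
  · refine absurd ?_ (R.reduced _ hγ)
    rwa [show (2 : ℝ) = r by push_cast at hz₁r; linarith]

theorem inner_mul_inner_lt {γ δ : V} (hγ : γ ∈ R.pos) (hδ : δ ∈ R.pos) (hne : γ ≠ δ) :
    ⟪γ, δ⟫ * ⟪γ, δ⟫ < ⟪γ, γ⟫ * ⟪δ, δ⟫ := by
  refine lt_of_le_of_ne (real_inner_mul_inner_self_le γ δ) fun heq => ?_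
  have habs : ‖⟪γ, δ⟫‖ = ‖γ‖ * ‖δ‖ := by
    rw [Real.norm_eq_abs, ← sq_eq_sq₀ (abs_nonneg _) (by positivity), sq_abs, mul_pow,
      ← real_inner_self_eq_norm_sq, ← real_inner_self_eq_norm_sq, sq, heq]
  obtain ⟨r, -, rfl⟩ := (norm_inner_eq_norm_iff (R.root_ne γ hγ) (R.root_ne δ hδ)).mp habs
  exact hne (by rw [eq_one_of_smul_mem hγ hδ, one_smul])

theorem exists_cartan_int {γ δ : V} (hγ : γ ∈ R.pos) (hδ : δ ∈ R.pos) (hne : γ ≠ δ) :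
    ∃ z₁ z₂ : ℤ, (z₁ : ℝ) * ⟪δ, δ⟫ = 2 * ⟪γ, δ⟫ ∧ (z₂ : ℝ) * ⟪γ, γ⟫ = 2 * ⟪δ, γ⟫ ∧
      z₁ * z₂ < 4 := by
  have hγγ := inner_self_pos hγ
  have hδδ := inner_self_pos hδ
  obtain ⟨z₁, hz₁⟩ := R.crystallographic δ hδ γ hγ
  obtain ⟨z₂, hz₂⟩ := R.crystallographic γ hγ δ hδ
  rw [div_eq_iff hδδ.ne'] at hz₁
  rw [div_eq_iff hγγ.ne'] at hz₂
  refine ⟨z₁, z₂, hz₁.symm, hz₂.symm, ?_⟩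
  have hlt := inner_mul_inner_lt hγ hδ hne
  rw [real_inner_comm γ δ] at hz₂
  have : ((z₁ * z₂ : ℤ) : ℝ) * (⟪γ, γ⟫ * ⟪δ, δ⟫) < 4 * (⟪γ, γ⟫ * ⟪δ, δ⟫) := by
    push_cast
    linear_combination (z₂ * ⟪γ, γ⟫) * hz₁.symm + (2 * ⟪γ, δ⟫) * hz₂.symm + 4 * hlt
  exact_mod_cast lt_of_mul_lt_mul_right this (by positivity)

theorem sub_int_smul_mem_or {α γ : V} (hα : α ∈ R.pos) (hγ : γ ∈ R.pos) {z : ℤ}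
    (hz : (z : ℝ) * ⟪α, α⟫ = 2 * ⟪γ, α⟫) :
    γ - (z : ℝ) • α ∈ R.pos ∨ -(γ - (z : ℝ) • α) ∈ R.pos := by
  have := R.reflect_mem α hα γ hγ
  rwa [← hz, mul_div_cancel_right₀ _ (inner_self_pos hα).ne'] at this

theorem sub_mem_or_sub_mem_of_inner_pos {γ δ : V} (hγ : γ ∈ R.pos) (hδ : δ ∈ R.pos)
    (hne : γ ≠ δ) (hip : 0 < ⟪γ, δ⟫) : γ - δ ∈ R.pos ∨ δ - γ ∈ R.pos := by
  obtain ⟨z₁, z₂, hz₁, hz₂, hlt⟩ := exists_cartan_int hγ hδ hne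
  have hz₁pos : 0 < z₁ := by
    have : (0 : ℝ) < z₁ * ⟪δ, δ⟫ := by linarith
    exact_mod_cast pos_of_mul_pos_left this (inner_self_pos hδ).le
  have hz₂pos : 0 < z₂ := by
    have : (0 : ℝ) < z₂ * ⟪γ, γ⟫ := by rw [real_inner_comm γ δ] at hz₂; linarith
    exact_mod_cast pos_of_mul_pos_left this (inner_self_pos hγ).le
  obtain rfl | rfl : z₁ = 1 ∨ z₂ = 1 := by
    by_contra! h
    nlinarith [show 2 ≤ z₁ by omega, show 2 ≤ z₂ by omega]
  · simpa using sub_int_smul_mem_or hδ hγ hz₁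
  · simpa [or_comm] using sub_int_smul_mem_or hγ hδ hz₂

theorem add_mem_of_inner_neg {γ δ : V} (hγ : γ ∈ R.pos) (hδ : δ ∈ R.pos)
    (hip : ⟪γ, δ⟫ < 0) : γ + δ ∈ R.pos := by
  have hne : γ ≠ δ := by rintro rfl; exact (inner_self_pos hγ).not_gt hip
  obtain ⟨z₁, z₂, hz₁, hz₂, hlt⟩ := exists_cartan_int hγ hδ hne
  have hz₁neg : z₁ < 0 := by
    have : (z₁ : ℝ) * ⟪δ, δ⟫ < 0 := by linarith
    exact_mod_cast neg_of_mul_neg_left this (inner_self_pos hδ).le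
  have hz₂neg : z₂ < 0 := by
    have : (z₂ : ℝ) * ⟪γ, γ⟫ < 0 := by rw [real_inner_comm γ δ] at hz₂; linarith
    exact_mod_cast neg_of_mul_neg_left this (inner_self_pos hγ).le
  obtain rfl | rfl : z₁ = -1 ∨ z₂ = -1 := by
    by_contra! h
    nlinarith [show z₁ ≤ -2 by omega, show z₂ ≤ -2 by omega]
  · have h := sub_int_smul_mem_or hδ hγ hz₁
    rw [Int.cast_neg, Int.cast_one, neg_one_smul, sub_neg_eq_add] at h
    exact h.resolve_right (neg_add_notMem hγ hδ)
  · have h := sub_int_smul_mem_or hγ hδ hz₂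
    rw [Int.cast_neg, Int.cast_one, neg_one_smul, sub_neg_eq_add, add_comm δ γ] at h
    exact h.resolve_right (neg_add_notMem hγ hδ)

theorem inner_simple_nonpos {α β : V} (hα : α ∈ R.simple) (hβ : β ∈ R.simple) (hne : α ≠ β) :
    ⟪α, β⟫ ≤ 0 := by
  by_contra! hip
  rcases sub_mem_or_sub_mem_of_inner_pos (R.simple_sub hα) (R.simple_sub hβ) hne hip with h | h
  · exact add_notMem_simple (R.simple_sub hβ) h (by rwa [add_sub_cancel])
  · exact add_notMem_simple (R.simple_sub hα) h (by rwa [add_sub_cancel])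

theorem sub_simple_mem_of_inner_pos {γ α : V} (hγ : γ ∈ R.pos) (hα : α ∈ R.simple)
    (hne : γ ≠ α) (hip : 0 < ⟪γ, α⟫) : γ - α ∈ R.pos :=
  (sub_mem_or_sub_mem_of_inner_pos hγ (R.simple_sub hα) hne hip).resolve_right fun h =>
    add_notMem_simple hγ h (by rwa [add_sub_cancel])

theorem inner_sum_smul_nonpos_of_disjoint {f g : V → ℝ} (hf : ∀ α, 0 ≤ f α) (hg : ∀ α, 0 ≤ g α)
    (hdisj : ∀ α ∈ R.simple, f α = 0 ∨ g α = 0) :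
    ⟪∑ α ∈ R.simple, f α • α, ∑ β ∈ R.simple, g β • β⟫ ≤ 0 := by
  simp only [sum_inner, inner_sum, real_inner_smul_left, real_inner_smul_right]
  refine sum_nonpos fun α hα => sum_nonpos fun β hβ => ?_
  obtain rfl | hne := eq_or_ne α β
  · rcases hdisj α hα with h | h <;> simp [h]
  · exact mul_nonpos_of_nonneg_of_nonpos (hg α)
      (mul_nonpos_of_nonneg_of_nonpos (hf β) (inner_simple_nonpos hβ hα hne.symm))

theorem exists_inner_neg_of_coeff_lt {γ₁ γ₂ α₀ : V} (h1 : γ₁ ∈ R.pos) (h2 : γ₂ ∈ R.pos)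
    (hα₀ : α₀ ∈ R.simple) (hlt₀ : R.coeff γ₁ α₀ < R.coeff γ₂ α₀)
    (hinner : ∀ α ∈ R.simple, R.coeff γ₁ α < R.coeff γ₂ α → ⟪γ₂, α⟫ ≤ 0) :
    ∃ α ∈ R.simple, R.coeff γ₁ α < R.coeff γ₂ α ∧ ⟪γ₁, α⟫ < 0 := by
  set a : V → ℝ := fun β => ((R.coeff γ₂ β - R.coeff γ₁ β : ℕ) : ℝ)
  set b : V → ℝ := fun β => ((R.coeff γ₁ β - R.coeff γ₂ β : ℕ) : ℝ)
  set v := ∑ β ∈ R.simple, a β • β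
  have hγ₁ : γ₁ = γ₂ - v + ∑ β ∈ R.simple, b β • β := by
    conv_lhs => rw [R.coeff_spec γ₁ h1]
    rw [R.coeff_spec γ₂ h2, ← sum_sub_distrib, ← sum_add_distrib]
    refine sum_congr rfl fun β _ => ?_
    rw [← sub_smul, ← add_smul]
    congr 1
    rcases le_total (R.coeff γ₁ β) (R.coeff γ₂ β) with h | h <;>
      simp [a, b, h, Nat.cast_sub, Nat.sub_eq_zero_of_le]
  have hinner_v : ∀ x : V, ⟪x, v⟫ = ∑ β ∈ R.simple, a β * ⟪x, β⟫ := fun x => by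
    simp only [v, inner_sum, real_inner_smul_right]
  have h2v : ⟪γ₂, v⟫ ≤ 0 := by
    rw [hinner_v]
    refine sum_nonpos fun β hβ => ?_
    rcases lt_or_ge (R.coeff γ₁ β) (R.coeff γ₂ β) with h | h
    · exact mul_nonpos_of_nonneg_of_nonpos (Nat.cast_nonneg _) (hinner β hβ h)
    · simp [a, Nat.sub_eq_zero_of_le h]
  have hwv : ⟪∑ β ∈ R.simple, b β • β, v⟫ ≤ 0 :=
    inner_sum_smul_nonpos_of_disjoint (fun _ => Nat.cast_nonneg _) (fun _ => Nat.cast_nonneg _)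
      fun β _ => by simp only [a, b, Nat.cast_eq_zero]; omega
  have hvv : 0 < ⟪v, v⟫ := by
    refine real_inner_self_pos.mpr fun hv => ?_
    have := eq_of_sum_smul_simple_eq (g := fun _ => 0)
      (by simp only [zero_smul, sum_const_zero]; exact hv) α₀ hα₀
    simp only [a, Nat.cast_eq_zero] at this
    omega
  have h1v : ∑ β ∈ R.simple, a β * ⟪γ₁, β⟫ < ∑ β ∈ R.simple, 0 := by
    rw [← hinner_v, sum_const_zero]
    have : ⟪γ₁, v⟫ = ⟪γ₂, v⟫ - ⟪v, v⟫ + ⟪∑ β ∈ R.simple, b β • β, v⟫ := by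
      rw [hγ₁, inner_add_left, inner_sub_left]
    linarith
  obtain ⟨α, hα, hneg⟩ := exists_lt_of_sum_lt h1v
  have ha : 0 ≤ a α := Nat.cast_nonneg _
  refine ⟨α, hα, ?_, ?_⟩
  · by_contra! h
    simp [a, Nat.sub_eq_zero_of_le h] at hneg
  · by_contra! h
    exact hneg.not_ge (mul_nonneg ha h)

/-- Since `γ₁ - γ₂ = β - α` is not a root, `⟪γ₁, γ₂⟫ ≤ 0`; together with the hypotheses this gives
`⟪γ₁, α⟫ ≤ -max ⟪γ₁, γ₁⟫ ⟪α, α⟫`, contradicting the strict Cauchy–Schwarz inequality. -/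
theorem add_simple_ne_add_simple_of_inner_nonpos {γ₁ γ₂ α β : V} (h1 : γ₁ ∈ R.pos)
    (h2 : γ₂ ∈ R.pos) (hα : α ∈ R.simple) (hβ : β ∈ R.simple) (hne : α ≠ β)
    (hα₂ : ⟪γ₂, α⟫ ≤ 0) (hβ₁ : ⟪γ₁, β⟫ ≤ 0) : γ₁ + α ≠ γ₂ + β := by
  intro heq
  have hsub : γ₁ - γ₂ = β - α := by
    rw [sub_eq_sub_iff_add_eq_add, heq, add_comm]
  have h12 : ⟪γ₁, γ₂⟫ ≤ 0 := by
    by_contra! hip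
    have hne12 : γ₁ ≠ γ₂ := by rintro rfl; exact hne (add_left_cancel heq)
    rcases sub_mem_or_sub_mem_of_inner_pos h1 h2 hne12 hip with h | h
    · rw [hsub] at h
      exact add_notMem_simple (R.simple_sub hα) h (by rwa [add_sub_cancel])
    · rw [← neg_sub, hsub, neg_sub] at h
      exact add_notMem_simple (R.simple_sub hβ) h (by rwa [add_sub_cancel])
  have hαα := inner_self_pos (R.simple_sub hα)
  have h1α : ⟪γ₁, α⟫ ≤ -⟪α, α⟫ := by
    rw [eq_sub_of_add_eq heq, inner_sub_left, inner_add_left]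
    linarith [inner_simple_nonpos hβ hα hne.symm]
  have h1α' : ⟪γ₁, α⟫ ≤ -⟪γ₁, γ₁⟫ := by
    have : ⟪γ₁, γ₂⟫ = ⟪γ₁, γ₁⟫ + ⟪γ₁, α⟫ - ⟪γ₁, β⟫ := by
      rw [eq_sub_of_add_eq heq.symm, inner_sub_right, inner_add_right]
    linarith
  have hne1 : γ₁ ≠ α := by rintro rfl; linarith
  nlinarith [inner_mul_inner_lt h1 (R.simple_sub hα) hne1, inner_self_pos h1]

theorem coeff_eq_sub_simple_add [DecidableEq V] {γ α : V} (hγ : γ ∈ R.pos) (hα : α ∈ R.simple)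
    (h : γ - α ∈ R.pos) :
    ∀ β ∈ R.simple, R.coeff γ β = R.coeff (γ - α) β + if β = α then 1 else 0 := by
  simpa only [sub_add_cancel] using coeff_add_simple h hα (by rwa [sub_add_cancel])

variable (R) in
def coeffDist (γ₁ γ₂ : V) : ℕ := ∑ α ∈ R.simple, Nat.dist (R.coeff γ₁ α) (R.coeff γ₂ α)

theorem coeffDist_comm (γ₁ γ₂ : V) : R.coeffDist γ₁ γ₂ = R.coeffDist γ₂ γ₁ :=
  sum_congr rfl fun _ _ => Nat.dist_comm _ _

variable (R) in
def MinIsRoot (γ₁ γ₂ : V) : Prop :=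
  ∃ μ ∈ R.pos, ∀ α ∈ R.simple, R.coeff μ α = min (R.coeff γ₁ α) (R.coeff γ₂ α)

variable (R) in
/-- The three ways in which the induction of `minIsRoot` makes progress. -/
def HasDescent (γ₁ γ₂ : V) : Prop :=
  (∀ α ∈ R.simple, R.coeff γ₁ α ≤ R.coeff γ₂ α) ∨
  (∃ α ∈ R.simple, R.coeff γ₁ α < R.coeff γ₂ α ∧ γ₂ - α ∈ R.pos) ∨
  (∃ α ∈ R.simple, R.coeff γ₁ α < R.coeff γ₂ α ∧ γ₁ + α ∈ R.pos ∧
    2 ≤ ∑ β ∈ R.simple, (R.coeff γ₂ β - R.coeff γ₁ β))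

theorem ne_of_coeff_lt {γ₁ γ₂ α : V} (hα : α ∈ R.simple)
    (hmin : ∃ η ∈ R.simple, min (R.coeff γ₁ η) (R.coeff γ₂ η) ≠ 0)
    (hlt : R.coeff γ₁ α < R.coeff γ₂ α) : γ₂ ≠ α := by
  classical
  rintro rfl
  obtain ⟨η, hη, hη0⟩ := hmin
  rw [coeff_simple hα γ₂ hα, if_pos rfl] at hlt
  rw [coeff_simple hα η hη] at hη0
  split_ifs at hη0 <;> subst_vars <;> omega

theorem hasDescent_or_hasDescent_swap {γ₁ γ₂ : V} (h1 : γ₁ ∈ R.pos) (h2 : γ₂ ∈ R.pos)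
    (hmin : ∃ η ∈ R.simple, min (R.coeff γ₁ η) (R.coeff γ₂ η) ≠ 0) :
    R.HasDescent γ₁ γ₂ ∨ R.HasDescent γ₂ γ₁ := by
  classical
  by_contra! hnone
  obtain ⟨hd₁₂, hd₂₁⟩ := hnone
  simp only [HasDescent, not_or, not_forall, not_exists, not_and, not_le] at hd₁₂ hd₂₁
  obtain ⟨⟨β, hβ, hβlt⟩, hsub₂, hexc₂⟩ := hd₁₂
  obtain ⟨⟨α, hα, hαlt⟩, hsub₁, hexc₁⟩ := hd₂₁
  have hinner₂ : ∀ α ∈ R.simple, R.coeff γ₁ α < R.coeff γ₂ α → ⟪γ₂, α⟫ ≤ 0 := by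
    intro α hα hlt
    by_contra! hip
    exact hsub₂ α hα hlt (sub_simple_mem_of_inner_pos h2 hα (ne_of_coeff_lt hα hmin hlt) hip)
  have hinner₁ : ∀ β ∈ R.simple, R.coeff γ₂ β < R.coeff γ₁ β → ⟪γ₁, β⟫ ≤ 0 := by
    intro β hβ hlt
    by_contra! hip
    exact hsub₁ β hβ hlt (sub_simple_mem_of_inner_pos h1 hβ
      (ne_of_coeff_lt hβ (by simpa only [min_comm] using hmin) hlt) hip)
  have hc₂ : ∀ η ∈ R.simple, R.coeff γ₂ η ≤ R.coeff γ₁ η + if η = α then 1 else 0 := by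
    obtain ⟨α', hα', hlt', hneg⟩ := exists_inner_neg_of_coeff_lt h1 h2 hα hαlt hinner₂
    exact (sum_tsub_lt_two_iff hα hαlt).mp
      (hexc₂ α' hα' hlt' (add_mem_of_inner_neg h1 (R.simple_sub hα') hneg))
  have hc₁ : ∀ η ∈ R.simple, R.coeff γ₁ η ≤ R.coeff γ₂ η + if η = β then 1 else 0 := by
    obtain ⟨β', hβ', hlt', hneg⟩ := exists_inner_neg_of_coeff_lt h2 h1 hβ hβlt hinner₁
    exact (sum_tsub_lt_two_iff hβ hβlt).mp
      (hexc₁ β' hβ' hlt' (add_mem_of_inner_neg h2 (R.simple_sub hβ') hneg))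
  have hne : α ≠ β := by rintro rfl; omega
  refine add_simple_ne_add_simple_of_inner_nonpos h1 h2 hα hβ hne (hinner₂ α hα hαlt)
    (hinner₁ β hβ hβlt) ?_
  rw [add_simple_eq_sum h1 hα, add_simple_eq_sum h2 hβ]
  refine sum_congr rfl fun η hη => ?_
  have h₁ := hc₁ η hη
  have h₂ := hc₂ η hη
  obtain rfl | hηα := eq_or_ne η α
  · simp only [↓reduceIte, if_neg hne] at h₁ h₂ ⊢
    congr 2
    omega
  obtain rfl | hηβ := eq_or_ne η β
  · simp only [↓reduceIte, if_neg hηα] at h₁ h₂ ⊢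
    congr 2
    omega
  · simp only [if_neg hηα, if_neg hηβ] at h₁ h₂ ⊢
    congr 2
    omega

theorem minIsRoot_of_sub_simple {γ₁ γ₂ α : V} (h1 : γ₁ ∈ R.pos) (h2 : γ₂ ∈ R.pos)
    (hα : α ∈ R.simple) (hlt : R.coeff γ₁ α < R.coeff γ₂ α) (hsub : γ₂ - α ∈ R.pos)
    (hmin : ∃ η ∈ R.simple, min (R.coeff γ₁ η) (R.coeff γ₂ η) ≠ 0)
    (IH : ∀ δ₁ ∈ R.pos, ∀ δ₂ ∈ R.pos, (∃ η ∈ R.simple, min (R.coeff δ₁ η) (R.coeff δ₂ η) ≠ 0) →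
      R.coeffDist δ₁ δ₂ < R.coeffDist γ₁ γ₂ → R.MinIsRoot δ₁ δ₂) :
    R.MinIsRoot γ₁ γ₂ := by
  classical
  have hc := coeff_eq_sub_simple_add h2 hα hsub
  have hmin_eq : ∀ β ∈ R.simple, min (R.coeff γ₁ β) (R.coeff (γ₂ - α) β)
      = min (R.coeff γ₁ β) (R.coeff γ₂ β) := by
    intro β hβ
    have := hc β hβ
    split_ifs at this <;> subst_vars <;> omega
  have hdist : R.coeffDist γ₁ (γ₂ - α) < R.coeffDist γ₁ γ₂ := by
    refine sum_lt_sum (fun β hβ => ?_) ⟨α, hα, ?_⟩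
    · have := hc β hβ
      unfold Nat.dist
      split_ifs at this <;> subst_vars <;> omega
    · have := hc α hα
      unfold Nat.dist
      rw [if_pos rfl] at this
      omega
  obtain ⟨η, hη, hη0⟩ := hmin
  obtain ⟨μ, hμ, hμc⟩ := IH γ₁ h1 (γ₂ - α) hsub ⟨η, hη, by rwa [hmin_eq η hη]⟩ hdist
  exact ⟨μ, hμ, fun β hβ => (hμc β hβ).trans (hmin_eq β hβ)⟩

theorem minIsRoot_of_add_simple {γ₁ γ₂ α : V} (h1 : γ₁ ∈ R.pos) (h2 : γ₂ ∈ R.pos)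
    (hα : α ∈ R.simple) (hlt : R.coeff γ₁ α < R.coeff γ₂ α) (hadd : γ₁ + α ∈ R.pos)
    (hexc : 2 ≤ ∑ β ∈ R.simple, (R.coeff γ₂ β - R.coeff γ₁ β))
    (hmin : ∃ η ∈ R.simple, min (R.coeff γ₁ η) (R.coeff γ₂ η) ≠ 0)
    (IH : ∀ δ₁ ∈ R.pos, ∀ δ₂ ∈ R.pos, (∃ η ∈ R.simple, min (R.coeff δ₁ η) (R.coeff δ₂ η) ≠ 0) →
      R.coeffDist δ₁ δ₂ < R.coeffDist γ₁ γ₂ → R.MinIsRoot δ₁ δ₂) :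
    R.MinIsRoot γ₁ γ₂ := by
  classical
  have hc := coeff_add_simple h1 hα hadd
  have hdist₁ : R.coeffDist (γ₁ + α) γ₂ < R.coeffDist γ₁ γ₂ := by
    refine sum_lt_sum (fun β hβ => ?_) ⟨α, hα, ?_⟩
    · have := hc β hβ
      unfold Nat.dist
      split_ifs at this <;> subst_vars <;> omega
    · have := hc α hα
      unfold Nat.dist
      rw [if_pos rfl] at this
      omega
  obtain ⟨η, hη, hη0⟩ := hmin
  obtain ⟨μ₁, hμ₁, hμ₁c⟩ := IH (γ₁ + α) hadd γ₂ h2 ⟨η, hη, by have := hc η hη; omega⟩ hdist₁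
  have hcμ₁ : ∀ β ∈ R.simple,
      R.coeff μ₁ β = min (R.coeff γ₁ β) (R.coeff γ₂ β) + if β = α then 1 else 0 := by
    intro β hβ
    rw [hμ₁c β hβ, hc β hβ]
    split_ifs <;> subst_vars <;> omega
  have hmin_eq : ∀ β ∈ R.simple, min (R.coeff γ₁ β) (R.coeff μ₁ β)
      = min (R.coeff γ₁ β) (R.coeff γ₂ β) := by
    intro β hβ
    have := hcμ₁ β hβ
    split_ifs at this <;> subst_vars <;> omega
  obtain ⟨β₁, hβ₁, hβ₁lt⟩ : ∃ β ∈ R.simple,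
      R.coeff γ₁ β + (if β = α then 1 else 0) < R.coeff γ₂ β := by
    by_contra! h
    exact hexc.not_gt ((sum_tsub_lt_two_iff hα hlt).mpr h)
  have hdist₂ : R.coeffDist γ₁ μ₁ < R.coeffDist γ₁ γ₂ := by
    refine sum_lt_sum (fun β hβ => ?_) ⟨β₁, hβ₁, ?_⟩
    · have := hcμ₁ β hβ
      unfold Nat.dist
      split_ifs at this <;> subst_vars <;> omega
    · have := hcμ₁ β₁ hβ₁
      unfold Nat.dist
      split_ifs at this hβ₁lt <;> omega
  obtain ⟨μ, hμ, hμc⟩ := IH γ₁ h1 μ₁ hμ₁ ⟨η, hη, by rwa [hmin_eq η hη]⟩ hdist₂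
  exact ⟨μ, hμ, fun β hβ => (hμc β hβ).trans (hmin_eq β hβ)⟩

theorem minIsRoot {γ₁ γ₂ : V} (h1 : γ₁ ∈ R.pos) (h2 : γ₂ ∈ R.pos)
    (hmin : ∃ η ∈ R.simple, min (R.coeff γ₁ η) (R.coeff γ₂ η) ≠ 0) : R.MinIsRoot γ₁ γ₂ := by
  induction hn : R.coeffDist γ₁ γ₂ using Nat.strong_induction_on generalizing γ₁ γ₂ with
  | _ n IH =>
  wlog hd : R.HasDescent γ₁ γ₂ generalizing γ₁ γ₂
  · obtain ⟨μ, hμ, hc⟩ := this h2 h1 (by simpa only [min_comm] using hmin)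
      (by rw [coeffDist_comm, hn]) ((hasDescent_or_hasDescent_swap h1 h2 hmin).resolve_left hd)
    exact ⟨μ, hμ, fun α hα => by rw [hc α hα, min_comm]⟩
  have IH' : ∀ δ₁ ∈ R.pos, ∀ δ₂ ∈ R.pos,
      (∃ η ∈ R.simple, min (R.coeff δ₁ η) (R.coeff δ₂ η) ≠ 0) →
      R.coeffDist δ₁ δ₂ < R.coeffDist γ₁ γ₂ → R.MinIsRoot δ₁ δ₂ :=
    fun δ₁ hδ₁ δ₂ hδ₂ hmin' hlt => IH _ (hn ▸ hlt) hδ₁ hδ₂ hmin' rfl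
  rcases hd with hle | ⟨α, hα, hlt, hsub⟩ | ⟨α, hα, hlt, hadd, hexc⟩
  · exact ⟨γ₁, h1, fun α hα => (min_eq_left (hle α hα)).symm⟩
  · exact minIsRoot_of_sub_simple h1 h2 hα hlt hsub hmin IH'
  · exact minIsRoot_of_add_simple h1 h2 hα hlt hadd hexc hmin IH'

end SimpleRS

/-- the greatest lower bound of `γ₁, γ₂` exists in `(Δ⁺, ≼)` iff
their supports intersect. -/
theorem stmt2 {V : Type*} [NormedAddCommGroup V] [InnerProductSpace ℝ V]
    (R : SimpleRS V) {γ₁ γ₂ : V} (h1 : γ₁ ∈ R.pos) (h2 : γ₂ ∈ R.pos) :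
    (∃ ν ∈ R.pos, R.rle ν γ₁ ∧ R.rle ν γ₂ ∧
        ∀ κ ∈ R.pos, R.rle κ γ₁ → R.rle κ γ₂ → R.rle κ ν) ↔
      (R.supp γ₁ ∩ R.supp γ₂).Nonempty := by
  constructor
  · rintro ⟨ν, hν, hν1, hν2, -⟩
    obtain ⟨α, hα, hne⟩ := SimpleRS.exists_coeff_ne_zero hν
    have := (SimpleRS.rle_iff_coeff_le hν h1).mp hν1 α hα
    have := (SimpleRS.rle_iff_coeff_le hν h2).mp hν2 α hα
    exact ⟨α, ⟨hα, by omega⟩, ⟨hα, by omega⟩⟩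
  · rintro ⟨α, ⟨hα, hα1⟩, ⟨-, hα2⟩⟩
    obtain ⟨μ, hμ, hμc⟩ := SimpleRS.minIsRoot h1 h2 ⟨α, hα, by omega⟩
    refine ⟨μ, hμ, (SimpleRS.rle_iff_coeff_le hμ h1).mpr fun β hβ => ?_,
      (SimpleRS.rle_iff_coeff_le hμ h2).mpr fun β hβ => ?_, fun κ hκ hκ1 hκ2 => ?_⟩
    · rw [hμc β hβ]; exact min_le_left _ _
    · rw [hμc β hβ]; exact min_le_right _ _
    · refine (SimpleRS.rle_iff_coeff_le hκ hμ).mpr fun β hβ => ?_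
      rw [hμc β hβ]
      exact le_min ((SimpleRS.rle_iff_coeff_le hκ h1).mp hκ1 β hβ)
        ((SimpleRS.rle_iff_coeff_le hκ h2).mp hκ2 β hβ)
end
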